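/- arXiv:1710.04722 — 2 statements merged into one kernel-verified Lean document; each statement's English description precedes it below -/
import Mathlib

section
/- Let S be a 0-left-cancellative semigroup with zero admitting least common multiples. If φ is an ultra-character of 𝔈(S) that is open (i.e. σ_φ is a nonempty open string), then φ = φ_{σ_φ}; consequently every open ultra-character of 𝔈(S) is of the form φ_σ for some open string σ such that φ_σ is an ultra-character. -/
/-!
For an open string `σ` and `u ∈ Λ`, the condition `σ ∈ θ*_u(F*_Λ)` unfolds to `u ∈ σ` and
`u⁻¹σ ⊆ F_Λ`. Testing `φ` against the sets `E_s` shows that `φ(θ_u(F_Λ)) = 1` forces this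
condition for `σ_φ`, so `φ ≤ φ_{σ_φ}`. Conversely, the sets `σ ∩ aS` with `a ∈ σ` are a basis
of a filter, proper because `σ` is open, which contains every `θ_u(F_Λ)` with
`σ ∈ θ*_u(F*_Λ)`, in particular every set on which `φ` is `1`. Membership in a proper filter
is a character, so maximality of `φ` gives `φ_{σ_φ} ≤ φ`. Least common multiples make `𝔈(S)`
closed under intersection (`θ_u(F_Λ) ∩ θ_v(F_M) = θ_r(F_{Λa ∪ Mb})` for an lcm
`r = ua = vb`), so `φ_{σ_φ}`, agreeing with `φ` on `𝔈(S)`, is itself an ultra-character.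
-/

namespace ExSt

variable {S : Type*} [SemigroupWithZero S]

/-- `s` divides `t`: `t = s` or `t = s * u` for some `u`. -/
def Divides (s t : S) : Prop := t = s ∨ ∃ u : S, t = s * u

/-- `r` is a least common multiple of `s` and `t`. -/
def IsLCM (s t r : S) : Prop :=
  (Set.range (s * ·) ∩ Set.range (t * ·) = Set.range (r * ·)) ∧ Divides s r ∧ Divides t r

/-- `S` is 0-left-cancellative. -/
def LeftCancel0 (S : Type*) [SemigroupWithZero S] : Prop :=
  ∀ s t r : S, s * t = s * r → s * t ≠ 0 → t = r

/-- `S` admits least common multiples. -/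
def AdmitsLCM (S : Type*) [SemigroupWithZero S] : Prop :=
  ∀ s t : S, ∃ r : S, IsLCM s t r

/-- A string in `S`. -/
def IsString (σ : Set S) : Prop :=
  σ.Nonempty ∧ (0 : S) ∉ σ ∧ (∀ s t : S, Divides s t → t ∈ σ → s ∈ σ) ∧
    ∀ s₁ ∈ σ, ∀ s₂ ∈ σ, ∃ s ∈ σ, Divides s₁ s ∧ Divides s₂ s

/-- `F_s = {x | s * x ≠ 0}`. -/
def Fset (s : S) : Set S := {x | s * x ≠ 0}

/-- `E_s = sS \ {0}`. -/
def Eset (s : S) : Set S := {y | ∃ x : S, y = s * x ∧ s * x ≠ 0}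

/-- `F_w` for `w` in the unitization `t̃S = S ∪ {1}` (modelled as `Option S`, `none = 1`). -/
def FsetW : Option S → Set S
  | none => {x | x ≠ 0}
  | some s => Fset s

/-- `E_w` for `w` in the unitization, with `E_1 = S'`. -/
def EsetW : Option S → Set S
  | none => {x | x ≠ 0}
  | some s => Eset s

/-- `F_Λ = ⋂_{w ∈ Λ} F_w`. -/
def FsetLam (Λ : Finset (Option S)) : Set S := ⋂ w ∈ Λ, FsetW w

/-- Left multiplication by `u ∈ t̃S` (with `1 · x = x`). -/
def thetaApp : Option S → S → S
  | none, x => x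
  | some u, x => u * x

/-- `θ_u(X)` for `u ∈ t̃S`. -/
def thetaImg (u : Option S) (X : Set S) : Set S := thetaApp u '' X

/-- The family `𝔈(S)` of constructible sets. -/
def Econs (S : Type*) [SemigroupWithZero S] : Set (Set S) :=
  {X | ∃ Λ : Finset (Option S), (∃ s : S, some s ∈ Λ) ∧ ∃ u ∈ Λ, X = thetaImg u (FsetLam Λ)}

/-- `r*σ = {t | t ∥ r·s for some s ∈ σ}`. -/
def rstar (r : S) (σ : Set S) : Set S := {t | ∃ s ∈ σ, Divides t (r * s)}

/-- `r⁻¹*σ = {t | r·t ∈ σ}`. -/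
def rinvstar (r : S) (σ : Set S) : Set S := {t | r * t ∈ σ}

/-- `F*_r`: strings `σ` with `r·s ≠ 0` for all `s ∈ σ`. -/
def Fstar (r : S) : Set (Set S) := {σ | IsString σ ∧ ∀ s ∈ σ, r * s ≠ 0}

/-- `E*_r`: strings `σ` with `σ ∩ rS ≠ ∅`. -/
def Estar (r : S) : Set (Set S) := {σ | IsString σ ∧ (σ ∩ Set.range (r * ·)).Nonempty}

/-- `F*_w` for `w` in the unitization, with `F*_1` the set of all strings. -/
def FstarW : Option S → Set (Set S)
  | none => {σ | IsString σ}
  | some r => Fstar r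

/-- `F*_Λ = ⋂_{w ∈ Λ} F*_w`. -/
def FstarLam (Λ : Finset (Option S)) : Set (Set S) := ⋂ w ∈ Λ, FstarW w

/-- The action of `u ∈ t̃S` on strings (with `1*σ = σ`). -/
def thetaStarApp : Option S → Set S → Set S
  | none => id
  | some u => rstar u

/-- `θ*_u(Y)` for `u ∈ t̃S`. -/
def thetaStarImg (u : Option S) (Y : Set (Set S)) : Set (Set S) := thetaStarApp u '' Y

/-- A character of the semilattice `E` (values `False`/`True` playing the role of `0`/`1`). -/
def IsCharacter (E : Set (Set S)) (φ : Set S → Prop) : Prop :=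
  ¬ φ ∅ ∧ (∃ X ∈ E, φ X) ∧ ∀ X ∈ E, ∀ Y ∈ E, (φ (X ∩ Y) ↔ φ X ∧ φ Y)

/-- An ultra-character: a character maximal for the pointwise order on `E`. -/
def IsUltraCharacter (E : Set (Set S)) (φ : Set S → Prop) : Prop :=
  IsCharacter E φ ∧
    ∀ ψ : Set S → Prop, IsCharacter E ψ → (∀ X ∈ E, φ X → ψ X) → ∀ X ∈ E, ψ X → φ X

/-- The character `φ_σ` associated with a string `σ`. -/
def phiStr (σ : Set S) (X : Set S) : Prop :=
  ∃ Λ : Finset (Option S), (∃ s : S, some s ∈ Λ) ∧ ∃ u ∈ Λ,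
    X = thetaImg u (FsetLam Λ) ∧ σ ∈ thetaStarImg u (FstarLam Λ)

/-- The set `σ_φ = {s | φ(E_s) = 1}` associated with a character `φ`. -/
def sigmaOf (φ : Set S → Prop) : Set S := {s | φ (Eset s)}

/-- The interior of a string. -/
def strInterior (σ : Set S) : Set S := {s | ∃ x : S, s * x ∈ σ}

namespace Divides

lemma refl (s : S) : Divides s s := Or.inl rfl

lemma trans {s t r : S} (h₁ : Divides s t) (h₂ : Divides t r) : Divides s r := by
  rcases h₁ with rfl | ⟨u, rfl⟩
  · exact h₂
  · rcases h₂ with rfl | ⟨v, rfl⟩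
    · exact Or.inr ⟨u, rfl⟩
    · exact Or.inr ⟨u * v, mul_assoc s u v⟩

lemma mul_left (a : S) {s t : S} (h : Divides s t) : Divides (a * s) (a * t) := by
  rcases h with rfl | ⟨u, rfl⟩
  · exact refl _
  · exact Or.inr ⟨u, (mul_assoc a s u).symm⟩

lemma of_mul_left (hlc : LeftCancel0 S) {a s t : S} (h : Divides (a * t) (a * s))
    (hs : a * s ≠ 0) : Divides t s := by
  rcases h with he | ⟨v, he⟩
  · exact Or.inl (hlc a s t he hs)
  · rw [mul_assoc] at he
    exact Or.inr ⟨v, hlc a s (t * v) he hs⟩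

lemma exists_eq_mul_left {a s c : S} (h : Divides (a * s) c) : ∃ t, c = a * t ∧ Divides s t := by
  rcases h with rfl | ⟨v, rfl⟩
  · exact ⟨s, rfl, refl s⟩
  · exact ⟨s * v, mul_assoc a s v, Or.inr ⟨v, rfl⟩⟩

lemma range_mul_subset {a c : S} (h : Divides a c) : Set.range (c * ·) ⊆ Set.range (a * ·) := by
  rintro _ ⟨y, rfl⟩
  rcases h with rfl | ⟨e, rfl⟩
  · exact ⟨y, rfl⟩
  · exact ⟨e * y, (mul_assoc a e y).symm⟩

end Divides

section Strings

variable {σ : Set S} {a : S}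

lemma exists_mul_mem_of_divides (hopen : σ ⊆ strInterior σ) {c : S} (hc : c ∈ σ)
    (h : Divides a c) : ∃ s, a * s ∈ σ ∧ Divides c (a * s) := by
  rcases h with rfl | ⟨e, rfl⟩
  · obtain ⟨y, hy⟩ := hopen hc
    exact ⟨y, hy, Or.inr ⟨y, rfl⟩⟩
  · exact ⟨e, hc, Divides.refl _⟩

lemma IsString.rinvstar (hlc : LeftCancel0 S) (hσ : IsString σ) (ha : a ∈ strInterior σ) :
    IsString (rinvstar a σ) := by
  obtain ⟨-, h0, hdown, hdir⟩ := hσ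
  refine ⟨ha, fun h => h0 (mul_zero a ▸ (h : a * 0 ∈ σ)),
    fun s t hst ht => hdown _ _ (hst.mul_left a) ht, fun t₁ ht₁ t₂ ht₂ => ?_⟩
  obtain ⟨c, hc, h₁, h₂⟩ := hdir _ ht₁ _ ht₂
  obtain ⟨t, rfl, ht⟩ := h₁.exists_eq_mul_left
  exact ⟨t, hc, ht, h₂.of_mul_left hlc fun h => h0 (h ▸ hc)⟩

lemma rstar_rinvstar (hσ : IsString σ) (hopen : σ ⊆ strInterior σ) (ha : a ∈ σ) :
    rstar a (rinvstar a σ) = σ := by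
  obtain ⟨-, -, hdown, hdir⟩ := hσ
  ext x
  refine ⟨fun ⟨s, hs, hxs⟩ => hdown x _ hxs hs, fun hx => ?_⟩
  obtain ⟨c, hc, hxc, hac⟩ := hdir x hx a ha
  obtain ⟨s, hs, hcs⟩ := exists_mul_mem_of_divides hopen hc hac
  exact ⟨s, hs, hxc.trans hcs⟩

lemma mem_of_mul_mem_rstar (hlc : LeftCancel0 S) {τ : Set S} (hτ : τ ∈ Fstar a) {t : S}
    (ht : a * t ∈ rstar a τ) : t ∈ τ := by
  obtain ⟨s, hs, hts⟩ := ht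
  exact hτ.1.2.2.1 t s (hts.of_mul_left hlc (hτ.2 s hs)) hs

lemma IsString.isBasis (hσ : IsString σ) :
    Filter.IsBasis (· ∈ σ) fun a => σ ∩ Set.range (a * ·) where
  nonempty := hσ.1
  inter {a₁ a₂} h₁ h₂ := by
    obtain ⟨c, hc, hc₁, hc₂⟩ := hσ.2.2.2 a₁ h₁ a₂ h₂
    exact ⟨c, hc, fun x hx =>
      ⟨⟨hx.1, hc₁.range_mul_subset hx.2⟩, ⟨hx.1, hc₂.range_mul_subset hx.2⟩⟩⟩

lemma IsString.neBot_filter (hσ : IsString σ) (hopen : σ ⊆ strInterior σ) :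
    hσ.isBasis.filter.NeBot :=
  hσ.isBasis.hasBasis.neBot_iff.2 fun {a} ha =>
    let ⟨s, hs, _⟩ := exists_mul_mem_of_divides hopen ha (Divides.refl a)
    ⟨a * s, hs, s, rfl⟩

end Strings

section Unitization

variable {σ τ : Set S} {u : Option S} {Λ : Finset (Option S)}

-- `Option.merge (· * ·)` is the multiplication of the unitization `t̃S`.
lemma thetaApp_merge (u o : Option S) (z : S) :
    thetaApp (Option.merge (· * ·) u o) z = thetaApp u (thetaApp o z) := by
  cases u <;> cases o <;> simp [Option.merge, thetaApp, mul_assoc]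

lemma thetaApp_mul (u : Option S) (t w : S) : thetaApp u (t * w) = thetaApp u t * w := by
  cases u <;> simp [thetaApp, mul_assoc]

lemma thetaApp_cancel (hlc : LeftCancel0 S) {y y' : S} (h : thetaApp u y = thetaApp u y')
    (h0 : thetaApp u y ≠ 0) : y = y' := by
  cases u with
  | none => exact h
  | some a => exact hlc a y y' h h0

lemma mem_fsetW {w : Option S} {x : S} : x ∈ FsetW w ↔ thetaApp w x ≠ 0 := by
  cases w <;> rfl

lemma mem_fsetLam {x : S} : x ∈ FsetLam Λ ↔ ∀ w ∈ Λ, thetaApp w x ≠ 0 := by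
  simp only [FsetLam, Set.mem_iInter, mem_fsetW]

lemma thetaApp_ne_zero (hu : u ∈ Λ) {x : S} (hx : x ∈ FsetLam Λ) : thetaApp u x ≠ 0 :=
  mem_fsetLam.1 hx u hu

lemma mem_fsetLam_of_mul_mem {t w : S} (h : t * w ∈ FsetLam Λ) : t ∈ FsetLam Λ :=
  mem_fsetLam.2 fun v hv ht => thetaApp_ne_zero hv h (by rw [thetaApp_mul, ht, zero_mul])

lemma mem_fstarW {w : Option S} : τ ∈ FstarW w ↔ IsString τ ∧ τ ⊆ FsetW w := by
  cases w with
  | none => exact ⟨fun h => ⟨h, fun x hx (h0 : x = 0) => h.2.1 (h0 ▸ hx)⟩, And.left⟩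
  | some r => rfl

lemma mem_fstarLam (hΛ : Λ.Nonempty) : τ ∈ FstarLam Λ ↔ IsString τ ∧ τ ⊆ FsetLam Λ := by
  obtain ⟨w₀, hw₀⟩ := hΛ
  simp only [FstarLam, FsetLam, Set.mem_iInter, Set.subset_iInter_iff, mem_fstarW]
  exact ⟨fun h => ⟨(h w₀ hw₀).1, fun w hw => (h w hw).2⟩, fun h w hw => ⟨h.1, h.2 w hw⟩⟩

lemma mem_thetaStarImg_iff (hlc : LeftCancel0 S) (hσ : IsString σ) (hopen : σ ⊆ strInterior σ)
    (hu : u ∈ Λ) :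
    σ ∈ thetaStarImg u (FstarLam Λ) ↔ (∀ a ∈ u, a ∈ σ) ∧ thetaApp u ⁻¹' σ ⊆ FsetLam Λ := by
  rw [thetaStarImg]
  cases u with
  | none =>
    simp only [thetaStarApp, Set.image_id, mem_fstarLam ⟨_, hu⟩, hσ, true_and]
    exact (and_iff_right fun _ h => nomatch h).symm
  | some a =>
    simp only [thetaStarApp, Set.mem_image, mem_fstarLam ⟨_, hu⟩, Option.mem_some_iff,
      forall_eq']
    constructor
    · rintro ⟨τ, ⟨hτ, hτΛ⟩, rfl⟩
      have hτa : τ ∈ Fstar a :=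
        mem_fstarW.2 ⟨hτ, fun t ht => mem_fsetW.2 (mem_fsetLam.1 (hτΛ ht) _ hu)⟩
      obtain ⟨t, ht⟩ := hτ.1
      exact ⟨⟨t, ht, Or.inr ⟨t, rfl⟩⟩, fun t ht => hτΛ (mem_of_mul_mem_rstar hlc hτa ht)⟩
    · rintro ⟨ha, hΛ⟩
      exact ⟨rinvstar a σ, ⟨hσ.rinvstar hlc (hopen ha), hΛ⟩, rstar_rinvstar hσ hopen ha⟩

end Unitization

section Constructible

open Classical

variable {u v : Option S} {Λ M : Finset (Option S)}

lemma eset_mem_econs (s : S) : Eset s ∈ Econs S := by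
  refine ⟨{some s}, ⟨s, Finset.mem_singleton_self _⟩, some s, Finset.mem_singleton_self _, ?_⟩
  ext x
  simp only [Eset, thetaImg, Set.mem_image, mem_fsetLam, Finset.mem_singleton, forall_eq]
  exact ⟨fun ⟨y, hx, hy⟩ => ⟨y, hy, hx.symm⟩, fun ⟨y, hy, hx⟩ => ⟨y, hx.symm, hy⟩⟩

lemma mem_econs_of_phiStr {σ X : Set S} (h : phiStr σ X) : X ∈ Econs S :=
  let ⟨Λ, hΛ, u, hu, hX, _⟩ := h
  ⟨Λ, hΛ, u, hu, hX⟩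

noncomputable def mulRightFinset (o : Option S) (Λ : Finset (Option S)) : Finset (Option S) :=
  Λ.image fun w => Option.merge (· * ·) w o

lemma fsetLam_mulRightFinset (o : Option S) :
    FsetLam (mulRightFinset o Λ) = thetaApp o ⁻¹' FsetLam Λ := by
  ext z
  simp only [mulRightFinset, Set.mem_preimage, mem_fsetLam, Finset.forall_mem_image,
    thetaApp_merge]

lemma fsetLam_union : FsetLam (Λ ∪ M) = FsetLam Λ ∩ FsetLam M := by
  ext x
  simp only [Set.mem_inter_iff, mem_fsetLam, Finset.mem_union, or_imp, forall_and]

lemma exists_common_right_multiple (hlcm : AdmitsLCM S) (u v : Option S) :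
    ∃ a b : Option S, Option.merge (· * ·) u a = Option.merge (· * ·) v b ∧
      Set.range (thetaApp u) ∩ Set.range (thetaApp v) ⊆
        Set.range (thetaApp (Option.merge (· * ·) u a)) := by
  have merge_of_divides {s r : S} (h : Divides s r) :
      ∃ o : Option S, Option.merge (· * ·) (some s) o = some r := by
    rcases h with rfl | ⟨o, rfl⟩
    exacts [⟨none, rfl⟩, ⟨some o, rfl⟩]
  cases u with
  | none => exact ⟨v, none, by cases v <;> rfl, fun x hx => by cases v <;> exact hx.2⟩
  | some s =>
    cases v with
    | none => exact ⟨none, some s, rfl, fun x hx => hx.1⟩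
    | some t =>
      obtain ⟨r, hr, hsr, htr⟩ := hlcm s t
      obtain ⟨a, ha⟩ := merge_of_divides hsr
      obtain ⟨b, hb⟩ := merge_of_divides htr
      exact ⟨a, b, ha.trans hb.symm, ha ▸ hr.le⟩

lemma thetaImg_inter_thetaImg (hlc : LeftCancel0 S) {a b : Option S} (hu : u ∈ Λ)
    (hab : Option.merge (· * ·) u a = Option.merge (· * ·) v b)
    (hrange : Set.range (thetaApp u) ∩ Set.range (thetaApp v) ⊆
      Set.range (thetaApp (Option.merge (· * ·) u a))) :
    thetaImg u (FsetLam Λ) ∩ thetaImg v (FsetLam M) =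
      thetaImg (Option.merge (· * ·) u a) (FsetLam (mulRightFinset a Λ ∪ mulRightFinset b M)) := by
  ext x
  simp only [thetaImg, fsetLam_union, fsetLam_mulRightFinset, Set.mem_inter_iff, Set.mem_image,
    Set.mem_preimage]
  constructor
  · rintro ⟨⟨y, hy, rfl⟩, w, hw, hwy⟩
    obtain ⟨z, hz⟩ := hrange ⟨⟨y, rfl⟩, w, hwy⟩
    have hx0 : thetaApp u y ≠ 0 := thetaApp_ne_zero hu hy
    have hzu : thetaApp u (thetaApp a z) = thetaApp u y := by rw [← thetaApp_merge, hz]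
    have hzv : thetaApp v (thetaApp b z) = thetaApp v w := by rw [← thetaApp_merge, ← hab, hz, hwy]
    have hyz : thetaApp a z = y := thetaApp_cancel hlc hzu (by rwa [hzu])
    have hwz : thetaApp b z = w := thetaApp_cancel hlc hzv (by rwa [hzv, hwy])
    exact ⟨z, ⟨hyz ▸ hy, hwz ▸ hw⟩, hz⟩
  · rintro ⟨z, ⟨hza, hzb⟩, rfl⟩
    exact ⟨⟨_, hza, (thetaApp_merge u a z).symm⟩, ⟨_, hzb, by rw [hab, thetaApp_merge]⟩⟩

lemma inter_mem_econs (hlc : LeftCancel0 S) (hlcm : AdmitsLCM S) {X Y : Set S}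
    (hX : X ∈ Econs S) (hY : Y ∈ Econs S) : X ∩ Y ∈ Econs S := by
  obtain ⟨Λ, ⟨s, hs⟩, u, hu, rfl⟩ := hX
  obtain ⟨M, -, v, -, rfl⟩ := hY
  obtain ⟨a, b, hab, hrange⟩ := exists_common_right_multiple hlcm u v
  have hs' : ∃ s', some s' ∈ mulRightFinset a Λ := by
    cases a
    exacts [⟨s, Finset.mem_image_of_mem _ hs⟩, ⟨_, Finset.mem_image_of_mem _ hs⟩]
  obtain ⟨s', hs'⟩ := hs'
  exact ⟨mulRightFinset a Λ ∪ mulRightFinset b M, ⟨s', Finset.mem_union_left _ hs'⟩,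
    Option.merge (· * ·) u a, Finset.mem_union_left _ (Finset.mem_image_of_mem _ hu),
    thetaImg_inter_thetaImg hlc hu hab hrange⟩

end Constructible

section Characters

variable {α : Type*} {E : Set (Set α)} {φ : Set α → Prop}

lemma IsCharacter.nonempty (hφ : IsCharacter E φ) {X : Set α} (h : φ X) : X.Nonempty :=
  Set.nonempty_iff_ne_empty.2 fun hX => hφ.1 (hX ▸ h)

lemma IsCharacter.mono (hφ : IsCharacter E φ) {X Y : Set α} (hX : X ∈ E) (hY : Y ∈ E)
    (hXY : X ⊆ Y) (h : φ X) : φ Y :=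
  ((hφ.2.2 X hX Y hY).1 (by rwa [Set.inter_eq_left.2 hXY])).2

lemma IsUltraCharacter.apply_of_mem_filter (hφ : IsUltraCharacter E φ) (l : Filter α) [l.NeBot]
    (hl : ∀ Y ∈ E, φ Y → Y ∈ l) {X : Set α} (hX : X ∈ E) (hXl : X ∈ l) : φ X :=
  hφ.2 (· ∈ l) ⟨Filter.empty_notMem l, ⟨X, hX, hXl⟩, fun _ _ _ _ => Filter.inter_mem_iff⟩
    hl X hX hXl

lemma IsUltraCharacter.congr (hE : ∀ X ∈ E, ∀ Y ∈ E, X ∩ Y ∈ E) {ψ : Set α → Prop}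
    (hψE : ∀ X, ψ X → X ∈ E) (h : ∀ X ∈ E, φ X ↔ ψ X) (hφ : IsUltraCharacter E φ) :
    IsUltraCharacter E ψ := by
  obtain ⟨⟨hφ_empty, ⟨X₀, hX₀, hφX₀⟩, hφinter⟩, hmax⟩ := hφ
  refine ⟨⟨fun hψ_empty => hφ_empty ((h ∅ (hψE ∅ hψ_empty)).2 hψ_empty),
    ⟨X₀, hX₀, (h X₀ hX₀).1 hφX₀⟩, fun X hX Y hY => ?_⟩, fun χ hχ hle X hX hχX => ?_⟩
  · rw [← h _ (hE X hX Y hY), ← h X hX, ← h Y hY]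
    exact hφinter X hX Y hY
  · exact (h X hX).1 (hmax χ hχ (fun Y hY hφY => hle Y hY ((h Y hY).1 hφY)) X hX hχX)

end Characters

section OpenStrings

variable {σ : Set S} {u : Option S} {Λ : Finset (Option S)}

lemma IsCharacter.sigmaOf_mem_thetaStarImg {φ : Set S → Prop} (hlc : LeftCancel0 S)
    (hφ : IsCharacter (Econs S) φ) (hσ : IsString (sigmaOf φ))
    (hopen : sigmaOf φ ⊆ strInterior (sigmaOf φ)) (hX : thetaImg u (FsetLam Λ) ∈ Econs S)
    (hu : u ∈ Λ) (h : φ (thetaImg u (FsetLam Λ))) :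
    sigmaOf φ ∈ thetaStarImg u (FstarLam Λ) := by
  refine (mem_thetaStarImg_iff hlc hσ hopen hu).2 ⟨fun a (ha : u = some a) => ?_, fun t ht => ?_⟩
  · subst ha
    refine hφ.mono hX (eset_mem_econs a) ?_ h
    rintro _ ⟨y, hy, rfl⟩
    exact ⟨y, rfl, thetaApp_ne_zero hu hy⟩
  · obtain ⟨_, ⟨y, hy, rfl⟩, w, hyw, -⟩ :=
      hφ.nonempty ((hφ.2.2 _ hX _ (eset_mem_econs _)).2 ⟨h, ht⟩)
    have hy_eq : y = t * w := thetaApp_cancel hlc (hyw.trans (thetaApp_mul u t w).symm)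
      (thetaApp_ne_zero hu hy)
    exact mem_fsetLam_of_mul_mem (hy_eq ▸ hy)

lemma thetaImg_mem_filter (hlc : LeftCancel0 S) (hσ : IsString σ) (hopen : σ ⊆ strInterior σ)
    (hu : u ∈ Λ) (h : σ ∈ thetaStarImg u (FstarLam Λ)) :
    thetaImg u (FsetLam Λ) ∈ hσ.isBasis.filter := by
  obtain ⟨hhead, hpre⟩ := (mem_thetaStarImg_iff hlc hσ hopen hu).1 h
  rw [hσ.isBasis.mem_filter_iff]
  cases u with
  | none =>
    obtain ⟨a, ha⟩ := hσ.1
    exact ⟨a, ha, fun x hx => ⟨x, hpre hx.1, rfl⟩⟩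
  | some a =>
    exact ⟨a, hhead a rfl, fun _ ⟨hx, y, hy⟩ => ⟨y, hpre (by rwa [← hy] at hx), hy⟩⟩

lemma phiStr_sigmaOf_of_apply {φ : Set S → Prop} (hlc : LeftCancel0 S)
    (hφ : IsCharacter (Econs S) φ) (hσ : IsString (sigmaOf φ))
    (hopen : sigmaOf φ ⊆ strInterior (sigmaOf φ)) {X : Set S} (hX : X ∈ Econs S) (h : φ X) :
    phiStr (sigmaOf φ) X := by
  obtain ⟨Λ, hΛ, u, hu, rfl⟩ := hX
  exact ⟨Λ, hΛ, u, hu, rfl, hφ.sigmaOf_mem_thetaStarImg hlc hσ hopen ⟨Λ, hΛ, u, hu, rfl⟩ hu h⟩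

lemma IsUltraCharacter.apply_of_phiStr_sigmaOf {φ : Set S → Prop} (hlc : LeftCancel0 S)
    (hφ : IsUltraCharacter (Econs S) φ) (hσ : IsString (sigmaOf φ))
    (hopen : sigmaOf φ ⊆ strInterior (sigmaOf φ)) {X : Set S} (h : phiStr (sigmaOf φ) X) :
    φ X := by
  obtain ⟨Λ, hΛ, u, hu, rfl, hmem⟩ := h
  have := hσ.neBot_filter hopen
  refine hφ.apply_of_mem_filter _ ?_ ⟨Λ, hΛ, u, hu, rfl⟩
    (thetaImg_mem_filter hlc hσ hopen hu hmem)
  rintro _ hY hφY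
  obtain ⟨M, -, v, hv, rfl⟩ := id hY
  exact thetaImg_mem_filter hlc hσ hopen hv (hφ.1.sigmaOf_mem_thetaStarImg hlc hσ hopen hY hv hφY)

end OpenStrings

/-- Every open ultra-character `φ` of `𝔈(S)` equals `φ_{σ_φ}`; consequently every open
ultra-character is of the form `φ_σ` for some open string `σ` with `φ_σ` ultra. -/
theorem open_ultra_character_is_phiStr (hlc : LeftCancel0 S) (hlcm : AdmitsLCM S)
    (φ : Set S → Prop) (hφ : IsUltraCharacter (Econs S) φ)
    (hstr : IsString (sigmaOf φ)) (hopen : sigmaOf φ = strInterior (sigmaOf φ)) :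
    (∀ X ∈ Econs S, (φ X ↔ phiStr (sigmaOf φ) X)) ∧
    ∃ σ : Set S, IsString σ ∧ σ = strInterior σ ∧
      IsUltraCharacter (Econs S) (phiStr σ) ∧ ∀ X ∈ Econs S, (φ X ↔ phiStr σ X) := by
  have hφσ : ∀ X ∈ Econs S, (φ X ↔ phiStr (sigmaOf φ) X) := fun X hX =>
    ⟨phiStr_sigmaOf_of_apply hlc hφ.1 hstr hopen.le hX,
      hφ.apply_of_phiStr_sigmaOf hlc hstr hopen.le⟩
  exact ⟨hφσ, sigmaOf φ, hstr, hopen,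
    hφ.congr (fun X hX Y hY => inter_mem_econs hlc hlcm hX hY) (fun X => mem_econs_of_phiStr) hφσ,
    hφσ⟩

end ExSt
end

section
/- Let S be a 0-left-cancellative semigroup with zero. (i) For every r ∈ S, the map σ ↦ r*σ is a bijection from F*_r onto E*_r, with inverse given by σ ↦ r⁻¹*σ. (ii) The assignment r ↦ θ*_r (where θ*_r : F*_r → E*_r, σ ↦ r*σ) is a representation of S on the set of strings: F*_0 = ∅, and for all r, s ∈ S and every string σ, one has σ ∈ F*_{s·r} if and only if (σ ∈ F*_r and r*σ ∈ F*_s), in which case s*(r*σ) = (s·r)*σ. -/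
namespace ExSt

variable {S : Type*} [SemigroupWithZero S]

lemma div_trans {a b c : S} (h1 : Divides a b) (h2 : Divides b c) : Divides a c := by
  rcases h1 with rfl | ⟨u, rfl⟩
  · exact h2
  · rcases h2 with rfl | ⟨v, rfl⟩
    · exact Or.inr ⟨u, rfl⟩
    · exact Or.inr ⟨u * v, mul_assoc a u v⟩

lemma div_mul_left {a b : S} (r : S) (h : Divides a b) : Divides (r * a) (r * b) := by
  rcases h with rfl | ⟨u, rfl⟩
  · exact Or.inl rfl
  · exact Or.inr ⟨u, (mul_assoc r a u).symm⟩

lemma rstar_isString {r : S} {σ : Set S} (h : σ ∈ Fstar r) : IsString (rstar r σ) := by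
  obtain ⟨⟨⟨s0, hs0⟩, h0, hdown, hdir⟩, hne⟩ := h
  refine ⟨⟨r * s0, ⟨s0, hs0, Or.inl rfl⟩⟩, ?_, ?_, ?_⟩
  · rintro ⟨s, hs, h | ⟨u, hu⟩⟩
    · exact hne s hs h
    · exact hne s hs (by simp [hu])
  · rintro a t hd ⟨s, hs, ht⟩
    exact ⟨s, hs, div_trans hd ht⟩
  · rintro t1 ⟨s1, hs1, hd1⟩ t2 ⟨s2, hs2, hd2⟩
    obtain ⟨s, hs, hds1, hds2⟩ := hdir s1 hs1 s2 hs2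
    exact ⟨r * s, ⟨s, hs, Or.inl rfl⟩,
      div_trans hd1 (div_mul_left r hds1), div_trans hd2 (div_mul_left r hds2)⟩

lemma rstar_mem_Estar {r : S} {σ : Set S} (h : σ ∈ Fstar r) : rstar r σ ∈ Estar r := by
  obtain ⟨s0, hs0⟩ := h.1.1
  exact ⟨rstar_isString h, r * s0, ⟨s0, hs0, Or.inl rfl⟩, ⟨s0, rfl⟩⟩

lemma rinvstar_rstar (hlc : LeftCancel0 S) {r : S} {σ : Set S} (h : σ ∈ Fstar r) :
    rinvstar r (rstar r σ) = σ := by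
  obtain ⟨⟨hne', h0, hdown, hdir⟩, hne⟩ := h
  ext t
  constructor
  · rintro ⟨s, hs, hd | ⟨u, hu⟩⟩
    · exact (hlc r s t hd (hne s hs)) ▸ hs
    · have : s = t * u := hlc r s (t * u) (by rw [hu, mul_assoc]) (hne s hs)
      exact hdown t s (Or.inr ⟨u, this⟩) hs
  · intro ht
    exact ⟨t, ht, Or.inl rfl⟩

lemma rinvstar_mem_Fstar (hlc : LeftCancel0 S) {r : S} {σ : Set S} (h : σ ∈ Estar r) :
    rinvstar r σ ∈ Fstar r := by
  obtain ⟨⟨hne, h0, hdown, hdir⟩, y, hy, x, hx⟩ := h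
  simp only at hx
  refine ⟨⟨⟨x, show r * x ∈ σ from hx ▸ hy⟩, ?_, ?_, ?_⟩, ?_⟩
  · intro hc
    exact h0 (by simpa using (show r * (0:S) ∈ σ from hc))
  · intro a t hd ht
    exact hdown (r * a) (r * t) (div_mul_left r hd) ht
  · intro t1 ht1 t2 ht2
    obtain ⟨s, hs, hd1, hd2⟩ := hdir (r * t1) ht1 (r * t2) ht2
    have hs0 : s ≠ 0 := fun hc => h0 (hc ▸ hs)
    obtain ⟨t, rfl, hdt1⟩ : ∃ t, s = r * t ∧ Divides t1 t := by
      rcases hd1 with rfl | ⟨u, rfl⟩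
      · exact ⟨t1, rfl, Or.inl rfl⟩
      · exact ⟨t1 * u, mul_assoc r t1 u, Or.inr ⟨u, rfl⟩⟩
    refine ⟨t, hs, hdt1, ?_⟩
    rcases hd2 with heq | ⟨v, heq⟩
    · exact Or.inl (hlc r t t2 heq hs0)
    · exact Or.inr ⟨v, hlc r t (t2 * v) (by rw [heq, mul_assoc]) hs0⟩
  · intro t ht
    exact fun hc => h0 (hc ▸ ht)

lemma rstar_rinvstar_s8 {r : S} {σ : Set S} (h : σ ∈ Estar r) :
    rstar r (rinvstar r σ) = σ := by
  obtain ⟨⟨hne, h0, hdown, hdir⟩, y, hy, x, hx⟩ := h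
  simp only at hx
  ext a
  constructor
  · rintro ⟨s, hs, hd⟩
    exact hdown a (r * s) hd hs
  · intro ha
    obtain ⟨s, hs, hda, hdx⟩ := hdir a ha (r * x) (hx ▸ hy)
    rcases hdx with rfl | ⟨u, rfl⟩
    · exact ⟨x, hs, hda⟩
    · exact ⟨x * u, show r * (x * u) ∈ σ from (mul_assoc r x u) ▸ hs,
        (mul_assoc r x u) ▸ hda⟩

/-- (i) `σ ↦ r*σ` is a bijection from `F*_r` onto `E*_r` with inverse `σ ↦ r⁻¹*σ`;
(ii) `r ↦ θ*_r` is a representation of `S` on the set of strings. -/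
theorem thetaStar_representation (hlc : LeftCancel0 S) :
    (∀ r : S,
      Set.BijOn (rstar r) (Fstar r) (Estar r) ∧
      (∀ σ ∈ Fstar r, rinvstar r (rstar r σ) = σ) ∧
      ∀ σ ∈ Estar r, rstar r (rinvstar r σ) = σ) ∧
    Fstar (0 : S) = ∅ ∧
    ∀ r s : S, ∀ σ : Set S, IsString σ →
      ((σ ∈ Fstar (s * r) ↔ σ ∈ Fstar r ∧ rstar r σ ∈ Fstar s) ∧
        (σ ∈ Fstar (s * r) → rstar s (rstar r σ) = rstar (s * r) σ)) := by

  refine ⟨?_, ?_, ?_⟩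
  · intro r
    refine ⟨⟨fun σ h => rstar_mem_Estar h, ?_, ?_⟩, fun σ h => rinvstar_rstar hlc h,
      fun σ h => rstar_rinvstar_s8 h⟩
    · intro σ1 h1 σ2 h2 heq
      rw [← rinvstar_rstar hlc h1, ← rinvstar_rstar hlc h2, heq]
    · intro σ h
      exact ⟨rinvstar r σ, rinvstar_mem_Fstar hlc h, rstar_rinvstar_s8 h⟩
  · ext σ
    simp only [Fstar, Set.mem_setOf_eq, Set.mem_empty_iff_false, iff_false]
    rintro ⟨⟨⟨s, hs⟩, -, -, -⟩, hne⟩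
    exact hne s hs (zero_mul s)
  · intro r s σ hσ
    constructor
    · constructor
      · rintro ⟨-, hne⟩
        have hr : ∀ t ∈ σ, r * t ≠ 0 := by
          intro t ht hc
          exact hne t ht (by rw [mul_assoc, hc, mul_zero])
        refine ⟨⟨hσ, hr⟩, rstar_isString ⟨hσ, hr⟩, ?_⟩
        rintro a ⟨t, ht, rfl | ⟨u, hu⟩⟩
        · rw [← mul_assoc]; exact hne t ht
        · intro hc
          apply hne t ht
          rw [mul_assoc, hu, ← mul_assoc, hc, zero_mul]
      · rintro ⟨⟨-, hr⟩, -, hs⟩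
        refine ⟨hσ, fun t ht => ?_⟩
        rw [mul_assoc]
        exact hs (r * t) ⟨t, ht, Or.inl rfl⟩
    · intro _
      ext a
      constructor
      · rintro ⟨b, ⟨t, ht, hdb⟩, hda⟩
        refine ⟨t, ht, div_trans hda ?_⟩
        rw [mul_assoc]
        exact div_mul_left s hdb
      · rintro ⟨t, ht, hda⟩
        exact ⟨r * t, ⟨t, ht, Or.inl rfl⟩, (mul_assoc s r t) ▸ hda⟩


end ExSt
end
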